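/- arXiv:1112.6142 — 7 statements merged into one kernel-verified Lean document; each statement's English description precedes it below -/
import Mathlib

section
/- For every real number α and every integer n ≥ 2, the minimum of ‖F_{n-1}α‖, ‖F_n α‖ and ‖F_{n+1}α‖ is at most 1/3. -/
/-- Distance from a real number to the nearest integer. -/
noncomputable def distNearestInt (x : ℝ) : ℝ := |x - round x|

@[simp]
lemma distNearestInt_zero : distNearestInt 0 = 0 := by
  simp [distNearestInt]

lemma distNearestInt_le_abs_sub_intCast (x : ℝ) (k : ℤ) : distNearestInt x ≤ |x - k| :=
  round_le x k

/-- If `x` and `y` are both more than `1/3` from the integers, their offsets from the nearest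
integers lie in `(1/3, 1/2]` in absolute value: with equal signs they add up to within `1/3` of
`±1`, with opposite signs to within `1/6` of `0`. -/
lemma min_distNearestInt_add_le_third (x y : ℝ) :
    min (min (distNearestInt x) (distNearestInt y)) (distNearestInt (x + y)) ≤ 1 / 3 := by
  simp only [min_le_iff]
  by_contra! h
  obtain ⟨⟨hx, hy⟩, hxy⟩ := h
  have hx' : |x - round x| ≤ 1 / 2 := abs_sub_round x
  have hy' : |y - round y| ≤ 1 / 2 := abs_sub_round y
  have hclose (k : ℤ) : 1 / 3 < |(x - round x) + (y - round y) - k| := by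
    calc 1 / 3 < distNearestInt (x + y) := hxy
      _ ≤ |x + y - ((round x + round y + k : ℤ) : ℝ)| := distNearestInt_le_abs_sub_intCast _ _
      _ = _ := by push_cast; ring_nf
  unfold distNearestInt at hx hy
  have h0 := hclose 0
  have h1 := hclose 1
  have h2 := hclose (-1)
  push_cast at h0 h1 h2
  rw [abs_le] at hx' hy'
  rw [lt_abs] at hx hy h0 h1 h2
  grind

theorem fib_three_consecutive_close_general (α : ℝ) (n : ℕ) :
    min (min (distNearestInt ((Nat.fib (n - 1) : ℝ) * α))
             (distNearestInt ((Nat.fib n : ℝ) * α)))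
        (distNearestInt ((Nat.fib (n + 1) : ℝ) * α)) ≤ 1 / 3 := by
  cases n with
  | zero => simp
  | succ m =>
    have hsum : (Nat.fib (m + 2) : ℝ) * α = Nat.fib m * α + Nat.fib (m + 1) * α := by
      rw [Nat.fib_add_two]; push_cast; ring
    simpa [hsum] using min_distNearestInt_add_le_third (Nat.fib m * α) (Nat.fib (m + 1) * α)

theorem fib_three_consecutive_close (α : ℝ) (n : ℕ) (hn : 2 ≤ n) :
    min (min (distNearestInt ((Nat.fib (n - 1) : ℝ) * α))
             (distNearestInt ((Nat.fib n : ℝ) * α)))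
        (distNearestInt ((Nat.fib (n + 1) : ℝ) * α)) ≤ 1 / 3 :=
  fib_three_consecutive_close_general α n
end

section
/- Let d_N^1 denote the supremum over all real α of min_{1 ≤ k ≤ N} ‖F_k α‖ (this supremum is attained). Then d_1^1 = 1/2, d_2^1 = 1/2, d_3^1 = 1/3, d_4^1 = 1/4 and d_5^1 = 1/4. -/
/-- `minFib N α` is `min_{1 ≤ k ≤ N} ‖F_k α‖` (junk value `0` if `N = 0`). -/
noncomputable def minFib (N : ℕ) (α : ℝ) : ℝ :=
  if h : (Finset.Icc 1 N).Nonempty then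
    (Finset.Icc 1 N).inf' h (fun k => distNearestInt ((Nat.fib k : ℝ) * α))
  else 0

lemma distNearestInt_le (x : ℝ) (m : ℤ) : distNearestInt x ≤ |x - m| := round_le x m

lemma distNearestInt_le_half (x : ℝ) : distNearestInt x ≤ 1 / 2 := abs_sub_round x

lemma distNearestInt_add_intCast (x : ℝ) (m : ℤ) :
    distNearestInt (x + m) = distNearestInt x := by
  simp [distNearestInt, round_add_intCast]

lemma distNearestInt_neg (x : ℝ) : distNearestInt (-x) = distNearestInt x := by
  have key (y : ℝ) : distNearestInt (-y) ≤ distNearestInt y := by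
    simpa [distNearestInt, abs_sub_comm, neg_add_eq_sub] using distNearestInt_le (-y) (-round y)
  exact le_antisymm (key x) (by simpa using key (-x))

lemma exists_distNearestInt_intCast_mul_eq (α : ℝ) :
    ∃ t ∈ Set.Icc (0 : ℝ) (1 / 2),
      ∀ n : ℤ, distNearestInt (n * α) = distNearestInt (n * t) := by
  refine ⟨distNearestInt α, ⟨abs_nonneg _, distNearestInt_le_half α⟩, fun n => ?_⟩
  have hshift : distNearestInt (n * α) = distNearestInt (n * (α - round α)) := by
    rw [← distNearestInt_add_intCast (n * (α - round α)) (n * round α)]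
    push_cast
    ring_nf
  rw [hshift]
  rcases abs_choice (α - round α) with h | h <;> rw [show distNearestInt α = _ from h]
  rw [mul_neg, distNearestInt_neg]

lemma minFib_le {N k : ℕ} (hk : k ∈ Finset.Icc 1 N) (α : ℝ) :
    minFib N α ≤ distNearestInt (Nat.fib k * α) := by
  rw [minFib, dif_pos ⟨k, hk⟩]
  exact Finset.inf'_le _ hk

lemma le_minFib {N : ℕ} (hN : 1 ≤ N) {α c : ℝ}
    (h : ∀ k ∈ Finset.Icc 1 N, c ≤ distNearestInt (Nat.fib k * α)) : c ≤ minFib N α := by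
  rw [minFib, dif_pos ⟨1, Finset.mem_Icc.mpr ⟨le_rfl, hN⟩⟩]
  exact Finset.le_inf' _ _ h

lemma minFib_le_abs_sub {N k : ℕ} (hk : k ∈ Finset.Icc 1 N) {α t : ℝ}
    (ht : ∀ n : ℤ, distNearestInt (n * α) = distNearestInt (n * t)) (m : ℤ) :
    minFib N α ≤ |Nat.fib k * t - m| := by
  have h := ht (Nat.fib k)
  push_cast at h
  exact (minFib_le hk α).trans (h ▸ distNearestInt_le _ m)

lemma minFib_le_half {N : ℕ} (hN : 1 ≤ N) (α : ℝ) : minFib N α ≤ 1 / 2 :=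
  (minFib_le (Finset.mem_Icc.mpr ⟨le_rfl, hN⟩) α).trans (distNearestInt_le_half _)

lemma minFib_le_third {N : ℕ} (hN : 3 ≤ N) (α : ℝ) : minFib N α ≤ 1 / 3 := by
  obtain ⟨t, ⟨ht0, ht1⟩, ht⟩ := exists_distNearestInt_intCast_mul_eq α
  have h1 := minFib_le_abs_sub (N := N) (k := 1) (Finset.mem_Icc.mpr ⟨le_rfl, by omega⟩) ht 0
  have h3 := minFib_le_abs_sub (N := N) (k := 3) (Finset.mem_Icc.mpr ⟨by norm_num, hN⟩) ht 1
  norm_num [Nat.fib_add_two, abs_of_nonneg ht0] at h1 h3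
  rw [abs_of_nonpos (by linarith)] at h3
  linarith

lemma minFib_le_quarter {N : ℕ} (hN : 4 ≤ N) (α : ℝ) : minFib N α ≤ 1 / 4 := by
  obtain ⟨t, ⟨ht0, ht1⟩, ht⟩ := exists_distNearestInt_intCast_mul_eq α
  have h1 := minFib_le_abs_sub (N := N) (k := 1) (Finset.mem_Icc.mpr ⟨le_rfl, by omega⟩) ht 0
  have h3 := minFib_le_abs_sub (N := N) (k := 3) (Finset.mem_Icc.mpr ⟨by norm_num, by omega⟩) ht 1
  have h4 := minFib_le_abs_sub (N := N) (k := 4) (Finset.mem_Icc.mpr ⟨by norm_num, hN⟩) ht 1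
  norm_num [Nat.fib_add_two, abs_of_nonneg ht0] at h1 h3 h4
  rw [abs_of_nonpos (by linarith)] at h3
  rcases abs_cases (3 * t - 1) with ⟨h, -⟩ | ⟨h, -⟩ <;> rw [h] at h4 <;> linarith

lemma isGreatest_minFib {N : ℕ} (hN : 1 ≤ N) {c : ℝ} (hle : ∀ α, minFib N α ≤ c) (α : ℝ)
    (hα : ∀ k ∈ Finset.Icc 1 N, c ≤ distNearestInt (Nat.fib k * α)) :
    IsGreatest {y : ℝ | ∃ α : ℝ, y = minFib N α} c :=
  ⟨⟨α, le_antisymm (le_minFib hN hα) (hle α)⟩, by rintro _ ⟨β, rfl⟩; exact hle β⟩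

theorem d_one_to_five :
    IsGreatest {y : ℝ | ∃ α : ℝ, y = minFib 1 α} (1 / 2) ∧
    IsGreatest {y : ℝ | ∃ α : ℝ, y = minFib 2 α} (1 / 2) ∧
    IsGreatest {y : ℝ | ∃ α : ℝ, y = minFib 3 α} (1 / 3) ∧
    IsGreatest {y : ℝ | ∃ α : ℝ, y = minFib 4 α} (1 / 4) ∧
    IsGreatest {y : ℝ | ∃ α : ℝ, y = minFib 5 α} (1 / 4) := by
  refine ⟨isGreatest_minFib le_rfl (minFib_le_half le_rfl) (1 / 2) ?_,
    isGreatest_minFib (by norm_num) (minFib_le_half (by norm_num)) (1 / 2) ?_,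
    isGreatest_minFib (by norm_num) (minFib_le_third le_rfl) (1 / 3) ?_,
    isGreatest_minFib (by norm_num) (minFib_le_quarter le_rfl) (1 / 4) ?_,
    isGreatest_minFib (by norm_num) (minFib_le_quarter (by norm_num)) (1 / 4) ?_⟩ <;>
  · intro k hk
    obtain ⟨hk1, hkN⟩ := Finset.mem_Icc.mp hk
    interval_cases k <;> norm_num [distNearestInt, round_eq]
end

section
/- Let d_N^1 denote the supremum over all real α of min_{1 ≤ k ≤ N} ‖F_k α‖. Then the sequence (d_N^1) converges as N → ∞ and lim_{N→∞} d_N^1 = (φ−1)/(φ+2). -/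
/-- The golden ratio. -/
noncomputable def φ : ℝ := (1 + Real.sqrt 5) / 2
/-!
With `ψ = (1 - √5) / 2` one has `5 / (φ + 2) = 2 + ψ` and `F (n + 1) * (2 + ψ) = L n + ψ ^ (n + 1)`
for the Lucas numbers `L`. Since `L n mod 5` runs through `2, 1, 3, 4` periodically, `F k / (φ + 2)`
is congruent mod `1` to `(r + ψ ^ k) / 5` with `r ∈ {1, 2, 3, 4}`, which keeps it at distance at
least `(1 - ψ ^ 4) / 5 = (φ - 1) / (φ + 2)` from the integers; this is the lower bound.

Conversely, suppose `‖F k t‖ ≥ c > (φ - 1) / (φ + 2)` for `1 ≤ k ≤ n`, with `0 ≤ t ≤ 1 / 2`. The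
indices `k ≤ 6` force `t = 1 / (φ + 2) - e` with `e ≥ 0` and `c ≤ (φ - 1) / (φ + 2) + 3 e`. For
`k ≡ 2 mod 4` the number `F k t` is `(1 + ψ ^ k) / 5 - F k e` mod `1`, and since `F (k + 4) ≤ 8 F k`
the value `F k e` can never jump over the forbidden window of radius `c` around `(1 + ψ ^ k) / 5`.
So `F K e < 1 / 3` for the largest such `K ≤ n`, whence `3 e ≤ 1 / (n - 4)`.
-/

open Nat (fib)
open Filter Topology

local notation "ψ" => Real.goldenConj

lemma φ_eq_goldenRatio : φ = Real.goldenRatio := rfl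

lemma inv_φ_add_two : (φ + 2)⁻¹ = (2 + ψ) / 5 :=
  inv_eq_of_mul_eq_one_right <| by
    rw [φ_eq_goldenRatio]
    linear_combination (Real.goldenRatio_mul_goldenConj + 2 * Real.goldenRatio_add_goldenConj) / 5

lemma φ_sub_one_div_φ_add_two : (φ - 1) / (φ + 2) = -(1 + 3 * ψ) / 5 := by
  rw [div_eq_mul_inv, inv_φ_add_two, φ_eq_goldenRatio, ← Real.one_sub_goldenConj]
  linear_combination (-(1:ℝ) / 5) * Real.goldenConj_sq

lemma neg_two_thirds_lt_goldenConj : -2 / 3 < ψ := by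
  nlinarith [Real.goldenConj_sq, Real.goldenConj_neg]

lemma goldenConj_lt_neg_eight_thirteenths : ψ < -8 / 13 := by
  nlinarith [Real.goldenConj_sq, Real.goldenConj_neg]

lemma abs_goldenConj_pow_le_one (n : ℕ) : |ψ ^ n| ≤ 1 := by
  rw [abs_pow]
  exact pow_le_one₀ (abs_nonneg _)
    (abs_le.mpr ⟨Real.neg_one_lt_goldenConj.le, Real.goldenConj_neg.le.trans zero_le_one⟩)

lemma goldenConj_pow_add_le {j : ℕ} (hj : Even j) (m : ℕ) : ψ ^ (j + m) ≤ ψ ^ j := by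
  rw [pow_add]
  exact mul_le_of_le_one_right (hj.pow_nonneg _) (abs_le.mp (abs_goldenConj_pow_le_one m)).2

lemma goldenConj_pow_four : ψ ^ 4 = 3 * ψ + 2 := by
  have h := Real.goldenConj_mul_fib_succ_add_fib 3
  norm_num [Nat.fib] at h
  linarith

lemma goldenConj_pow_six : ψ ^ 6 = 8 * ψ + 5 := by
  have h := Real.goldenConj_mul_fib_succ_add_fib 5
  norm_num [Nat.fib] at h
  linarith

def lucas (n : ℕ) : ℤ := 2 * fib (n + 1) - fib n

lemma lucas_add_four (n : ℕ) : lucas (n + 4) = lucas n + 5 * fib (n + 2) := by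
  simp only [lucas, Nat.fib_add_two]
  push_cast
  ring

lemma exists_lucas_eq_lucas_mod_four (n : ℕ) : ∃ q : ℤ, lucas n = lucas (n % 4) + 5 * q := by
  induction n using Nat.strong_induction_on with
  | _ n ih =>
    rcases lt_or_ge n 4 with hn | hn
    · exact ⟨0, by rw [Nat.mod_eq_of_lt hn]; ring⟩
    · obtain ⟨m, rfl⟩ := Nat.exists_eq_add_of_le' hn
      obtain ⟨q, hq⟩ := ih m (by omega)
      exact ⟨q + fib (m + 2), by rw [lucas_add_four, hq, Nat.add_mod_right]; ring⟩

lemma fib_succ_mul_eq (n : ℕ) : 5 * (fib (n + 1) * ((2 + ψ) / 5)) = lucas n + ψ ^ (n + 1) := by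
  rw [← Real.goldenConj_mul_fib_succ_add_fib, lucas]
  push_cast
  ring

lemma exists_fib_succ_mul_eq (n : ℕ) :
    ∃ q : ℤ, fib (n + 1) * ((2 + ψ) / 5) = q + (lucas (n % 4) + ψ ^ (n + 1)) / 5 := by
  obtain ⟨q, hq⟩ := exists_lucas_eq_lucas_mod_four n
  refine ⟨q, ?_⟩
  have := fib_succ_mul_eq n
  rw [hq] at this
  push_cast at this
  linarith

lemma le_distNearestInt {x δ : ℝ} (j : ℤ) (h₁ : δ ≤ x - j) (h₂ : x - j ≤ 1 - δ) :
    δ ≤ distNearestInt x := by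
  unfold distNearestInt
  rcases le_or_gt (round x) j with h | h
  · have : (round x : ℝ) ≤ j := by exact_mod_cast h
    exact le_abs.mpr (.inl (by linarith))
  · have : (j : ℝ) + 1 ≤ round x := by exact_mod_cast h
    exact le_abs.mpr (.inr (by linarith))

lemma le_distNearestInt_fib_mul {k : ℕ} (hk : 1 ≤ k) :
    -(1 + 3 * ψ) / 5 ≤ distNearestInt (fib k * ((2 + ψ) / 5)) := by
  obtain ⟨n, rfl⟩ : ∃ n, k = n + 1 := ⟨k - 1, by omega⟩
  obtain ⟨q, hq⟩ := exists_fib_succ_mul_eq n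
  have hψ₁ := neg_two_thirds_lt_goldenConj
  have hψ₂ := goldenConj_lt_neg_eight_thirteenths
  have hpow := abs_le.mp (abs_goldenConj_pow_le_one (n + 1))
  suffices h : -(1 + 3 * ψ) ≤ lucas (n % 4) + ψ ^ (n + 1) ∧
      lucas (n % 4) + ψ ^ (n + 1) ≤ 6 + 3 * ψ by
    apply le_distNearestInt q <;> rw [hq] <;> linarith
  have h4 : n % 4 = 0 ∨ n % 4 = 1 ∨ n % 4 = 2 ∨ n % 4 = 3 := by omega
  rcases h4 with h | h | h | h <;> rw [h] <;> norm_num [lucas, Nat.fib]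
  · constructor <;> linarith
  · have : 0 ≤ ψ ^ (n + 1) := Even.pow_nonneg (Nat.even_iff.mpr (by omega)) _
    constructor <;> linarith
  · constructor <;> linarith
  · -- `k = 4` attains the bound
    have := goldenConj_pow_add_le (j := 4) (by decide) (n - 3)
    rw [show 4 + (n - 3) = n + 1 by omega, goldenConj_pow_four] at this
    constructor <;> linarith

lemma minFib_le_distNearestInt {N k : ℕ} (hk : k ∈ Finset.Icc 1 N) (α : ℝ) :
    minFib N α ≤ distNearestInt (fib k * α) := by
  rw [minFib, dif_pos ⟨k, hk⟩]
  exact Finset.inf'_le _ hk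

lemma le_minFib_inv_φ_add_two {N : ℕ} (hN : 1 ≤ N) : (φ - 1) / (φ + 2) ≤ minFib N (φ + 2)⁻¹ := by
  have hne : (Finset.Icc 1 N).Nonempty := ⟨1, Finset.mem_Icc.mpr ⟨le_rfl, hN⟩⟩
  rw [minFib, dif_pos hne, φ_sub_one_div_φ_add_two, inv_φ_add_two]
  exact Finset.le_inf' hne _ fun k hk ↦ le_distNearestInt_fib_mul (Finset.mem_Icc.mp hk).1

lemma le_sub_of_le_abs_sub {a c y : ℝ} (h : c ≤ |a - y|) (hy : y < a + c) : y ≤ a - c := by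
  rcases le_abs.mp h with h | h <;> linarith

lemma fib_add_four_le {k : ℕ} (hk : 1 ≤ k) : fib (k + 4) ≤ 8 * fib k := by
  obtain ⟨n, rfl⟩ : ∃ n, k = n + 1 := ⟨k - 1, by omega⟩
  have h₂ : fib (n + 2) = fib n + fib (n + 1) := Nat.fib_add_two
  have h₃ : fib (n + 3) = fib (n + 1) + fib (n + 2) := Nat.fib_add_two
  have h₄ : fib (n + 4) = fib (n + 2) + fib (n + 3) := Nat.fib_add_two
  have h₅ : fib (n + 1 + 4) = fib (n + 3) + fib (n + 4) := Nat.fib_add_two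
  have hmono : fib n ≤ fib (n + 1) := Nat.fib_le_fib_succ
  omega

lemma exists_fib_mul_sub_eq {k : ℕ} (hk : k % 4 = 2) (t : ℝ) :
    ∃ m : ℤ, fib k * t - m = (1 + ψ ^ k) / 5 - fib k * ((2 + ψ) / 5 - t) := by
  obtain ⟨n, rfl⟩ : ∃ n, k = n + 1 := ⟨k - 1, by omega⟩
  obtain ⟨q, hq⟩ := exists_fib_succ_mul_eq n
  rw [show n % 4 = 1 by omega, show lucas 1 = 1 by norm_num [lucas]] at hq
  exact ⟨q, by push_cast at hq; linear_combination hq⟩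

def FibMulFar (n : ℕ) (c t : ℝ) : Prop := ∀ k ∈ Finset.Icc 1 n, ∀ m : ℤ, c ≤ |fib k * t - m|

namespace FibMulFar

variable {n : ℕ} {c t : ℝ}

lemma le_abs_sub (h : FibMulFar n c t) {k : ℕ} (hk : 1 ≤ k) (hkn : k ≤ n) (m : ℤ) :
    c ≤ |fib k * t - m| :=
  h k (Finset.mem_Icc.mpr ⟨hk, hkn⟩) m

lemma neg (h : FibMulFar n c t) : FibMulFar n c (-t) := fun k hk m ↦ by
  rw [abs_sub_comm]
  convert h k hk (-m) using 2
  push_cast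
  ring

lemma fib_mul_le_of_lt (h : FibMulFar n c t) {k : ℕ} (hk : k % 4 = 2) (hkn : k ≤ n)
    (hlt : fib k * ((2 + ψ) / 5 - t) < (1 + ψ ^ k) / 5 + c) :
    fib k * ((2 + ψ) / 5 - t) ≤ (1 + ψ ^ k) / 5 - c := by
  obtain ⟨m, hm⟩ := exists_fib_mul_sub_eq hk t
  have := h.le_abs_sub (by omega) hkn m
  rw [hm] at this
  exact le_sub_of_le_abs_sub this hlt

lemma le_self (h : FibMulFar n c t) (hn : 1 ≤ n) (ht₀ : 0 ≤ t) : c ≤ t := by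
  simpa [abs_of_nonneg ht₀] using h.le_abs_sub le_rfl hn 0

lemma three_mul_add_le_one (h : FibMulFar n c t) (hn : 5 ≤ n) (hc : 1 / 7 < c)
    (ht : t ≤ 1 / 2) : 3 * t + c ≤ 1 := by
  have h₃ := h.le_abs_sub (k := 3) (by omega) (by omega) 1
  have h₄ := h.le_abs_sub (k := 4) (by omega) (by omega) 1
  have h₅ := h.le_abs_sub (k := 5) (by omega) hn 2
  norm_num [Nat.fib] at h₃ h₄ h₅
  rcases le_abs.mp h₃ with h₃ | h₃ <;> rcases le_abs.mp h₄ with h₄ | h₄ <;>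
    rcases le_abs.mp h₅ with h₅ | h₅ <;> linarith

lemma two_add_le_eight_mul (h : FibMulFar n c t) (hn : 6 ≤ n) (hc : 1 / 6 < c)
    (ht₀ : 0 ≤ t) : 2 + c ≤ 8 * t := by
  have hct := h.le_self (by omega) ht₀
  have h₅ := h.le_abs_sub (k := 5) (by omega) (by omega) 1
  have h₆ := h.le_abs_sub (k := 6) (by omega) hn 2
  norm_num [Nat.fib] at h₅ h₆
  rcases le_abs.mp h₅ with h₅ | h₅ <;> rcases le_abs.mp h₆ with h₆ | h₆ <;> linarith

lemma fib_mul_le (h : FibMulFar n c t) (hc : -(1 + 3 * ψ) / 5 < c)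
    (he : 0 ≤ (2 + ψ) / 5 - t) (h₈ : 2 + c ≤ 8 * t) (j : ℕ) (hj : 4 * j + 6 ≤ n) :
    fib (4 * j + 6) * ((2 + ψ) / 5 - t) ≤ (1 + ψ ^ (4 * j + 6)) / 5 - c := by
  induction j with
  | zero =>
    rw [show 4 * 0 + 6 = 6 by rfl, goldenConj_pow_six]
    norm_num [Nat.fib]
    linarith
  | succ j ih =>
    set k := 4 * j + 6 with hk
    rw [show 4 * (j + 1) + 6 = k + 4 by omega] at hj ⊢
    refine h.fib_mul_le_of_lt (by omega) hj ?_
    have hprev := ih (by omega)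
    have hfib : (fib (k + 4) : ℝ) ≤ 8 * fib k := by exact_mod_cast fib_add_four_le (by omega)
    have hψk : ψ ^ k ≤ ψ ^ 6 := by
      simpa [hk, add_comm] using goldenConj_pow_add_le (j := 6) (by decide) (4 * j)
    have hψk₄ : 0 ≤ ψ ^ (k + 4) := Even.pow_nonneg (Nat.even_iff.mpr (by omega)) _
    have hψ := goldenConj_lt_neg_eight_thirteenths
    calc fib (k + 4) * ((2 + ψ) / 5 - t) ≤ 8 * fib k * ((2 + ψ) / 5 - t) :=
          mul_le_mul_of_nonneg_right hfib he
      _ ≤ 8 * ((1 + ψ ^ 6) / 5 - c) := by linarith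
      _ < 1 / 5 + c := by rw [goldenConj_pow_six]; linarith
      _ ≤ (1 + ψ ^ (k + 4)) / 5 + c := by linarith

lemma le_add_one_div (h : FibMulFar n c t) (hn : 6 ≤ n) (ht : |t| ≤ 1 / 2) :
    c ≤ -(1 + 3 * ψ) / 5 + 1 / (n - 4) := by
  have hn₄ : (0 : ℝ) < n - 4 := by
    have : (6 : ℝ) ≤ n := by exact_mod_cast hn
    linarith
  rcases le_or_gt c (-(1 + 3 * ψ) / 5) with hc | hc
  · linarith [one_div_pos.mpr hn₄]
  wlog ht₀ : 0 ≤ t generalizing t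
  · exact this h.neg (by rwa [abs_neg]) (by linarith)
  rw [abs_of_nonneg ht₀] at ht
  have hψ := goldenConj_lt_neg_eight_thirteenths
  have h₃ₜ := h.three_mul_add_le_one (by omega) (by linarith) ht
  have h₈ₜ := h.two_add_le_eight_mul hn (by linarith) ht₀
  obtain ⟨j, hj, hnj⟩ : ∃ j, 4 * j + 6 ≤ n ∧ n ≤ 4 * j + 9 := ⟨(n - 6) / 4, by omega, by omega⟩
  have he : 0 ≤ (2 + ψ) / 5 - t := by linarith
  have hK := h.fib_mul_le hc he h₈ₜ j hj
  have hψK := (abs_le.mp (abs_goldenConj_pow_le_one (4 * j + 6))).2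
  have hFK : (n : ℝ) - 4 ≤ fib (4 * j + 6) := by
    have := Nat.le_fib_add_one (4 * j + 6)
    have : n ≤ fib (4 * j + 6) + 4 := by omega
    have : (n : ℝ) ≤ fib (4 * j + 6) + 4 := by exact_mod_cast this
    linarith
  have : 3 * ((2 + ψ) / 5 - t) * (n - 4) ≤ 1 := by
    linarith [mul_le_mul_of_nonneg_left hFK he]
  calc c ≤ -(1 + 3 * ψ) / 5 + 3 * ((2 + ψ) / 5 - t) := by linarith
    _ ≤ -(1 + 3 * ψ) / 5 + 1 / (n - 4) := by
      gcongr
      rwa [le_div_iff₀ hn₄]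

end FibMulFar

lemma fibMulFar_of_le_minFib {n : ℕ} {c α : ℝ} (h : c ≤ minFib n α) :
    FibMulFar n c (α - round α) := fun k hk m ↦
  calc c ≤ distNearestInt (fib k * α) := h.trans (minFib_le_distNearestInt hk α)
    _ ≤ |fib k * α - ((m + fib k * round α : ℤ) : ℝ)| := round_le _ _
    _ = |fib k * (α - round α) - m| := by push_cast; ring_nf

lemma minFib_le_add_one_div {n : ℕ} (hn : 6 ≤ n) (α : ℝ) :
    minFib n α ≤ (φ - 1) / (φ + 2) + 1 / (n - 4) := by
  rw [φ_sub_one_div_φ_add_two]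
  exact (fibMulFar_of_le_minFib le_rfl).le_add_one_div hn (abs_sub_round α)

theorem d_N_tendsto :
    Filter.Tendsto (fun N : ℕ => sSup {y : ℝ | ∃ α : ℝ, y = minFib N α})
      Filter.atTop (nhds ((φ - 1) / (φ + 2))) := by
  have hlim : Tendsto (fun N : ℕ ↦ (φ - 1) / (φ + 2) + 1 / ((N : ℝ) - 4)) atTop
      (𝓝 ((φ - 1) / (φ + 2))) := by
    have h : Tendsto (fun N : ℕ ↦ (N : ℝ) - 4) atTop atTop :=
      tendsto_atTop_add_const_right atTop (-4) tendsto_natCast_atTop_atTop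
    simpa using tendsto_const_nhds.add (tendsto_const_nhds (x := (1 : ℝ)).div_atTop h)
  refine tendsto_of_tendsto_of_tendsto_of_le_of_le' tendsto_const_nhds hlim ?_ ?_ <;>
    filter_upwards [eventually_ge_atTop 6] with N hN
  · have hbdd : BddAbove {y : ℝ | ∃ α : ℝ, y = minFib N α} := by
      refine ⟨(φ - 1) / (φ + 2) + 1 / (N - 4), ?_⟩
      rintro _ ⟨α, rfl⟩
      exact minFib_le_add_one_div hN α
    exact (le_minFib_inv_φ_add_two (by omega)).trans (le_csSup hbdd ⟨_, rfl⟩)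
  · exact csSup_le ⟨_, 0, rfl⟩ fun _ ⟨α, hα⟩ ↦ hα ▸ minFib_le_add_one_div hN α
end

section
/- Let k ≥ 6 be an integer. Consider all real sequences (G_n)_{n≥1} satisfying G_n = G_{n-1} + G_{n-2} for n ≥ 3 (equivalently, all choices of real G_1, G_2). Then the supremum over such sequences of min_{1 ≤ n ≤ k} ‖G_n‖ equals 1/5, and it is attained. -/
lemma Int.fract_add_eq_or (a b : ℝ) :
    Int.fract (a + b) = Int.fract a + Int.fract b ∨
      Int.fract (a + b) = Int.fract a + Int.fract b - 1 := by
  obtain ⟨z, hz⟩ := Int.fract_add a b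
  have hlo : (-1 : ℝ) ≤ z := by linarith [Int.fract_add_fract_le a b]
  have hhi : (z : ℝ) ≤ 0 := by linarith [Int.fract_add_le a b]
  have hz' : z = 0 ∨ z = -1 := by
    have : (-1 : ℤ) ≤ z := by exact_mod_cast hlo
    have : z ≤ 0 := by exact_mod_cast hhi
    omega
  rcases hz' with rfl | rfl
  · left; push_cast at hz; linarith
  · right; push_cast at hz; linarith

lemma one_fifth_lt_distNearestInt_iff (x : ℝ) :
    1 / 5 < distNearestInt x ↔ 1 / 5 < Int.fract x ∧ Int.fract x < 4 / 5 := by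
  rw [distNearestInt, abs_sub_round_eq_min, lt_min_iff]
  constructor <;> rintro ⟨h₁, h₂⟩ <;> constructor <;> linarith

lemma one_div_le_distNearestInt_intCast_div {q : ℕ} (hq : 0 < q) {m : ℤ} (hm : ¬ (q : ℤ) ∣ m) :
    1 / q ≤ distNearestInt (m / q) := by
  have hq' : (0 : ℝ) < q := by exact_mod_cast hq
  set r := round ((m : ℝ) / q)
  have hne : m - q * r ≠ 0 := fun h => hm ⟨r, by omega⟩
  have hone : (1 : ℝ) ≤ |((m - q * r : ℤ) : ℝ)| := by exact_mod_cast Int.one_le_abs hne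
  have hdiff : (m : ℝ) / q - r = ((m - q * r : ℤ) : ℝ) / q := by
    push_cast; field_simp
  rw [distNearestInt, hdiff, abs_div, abs_of_pos hq']
  gcongr

lemma exists_distNearestInt_le_one_fifth {G : ℕ → ℝ}
    (hG : ∀ n, 3 ≤ n → G n = G (n - 1) + G (n - 2)) :
    ∃ n ∈ Finset.Icc 1 6, distNearestInt (G n) ≤ 1 / 5 := by
  by_contra! hlarge
  have hf : ∀ n ∈ Finset.Icc 1 6, 1 / 5 < Int.fract (G n) ∧ Int.fract (G n) < 4 / 5 :=
    fun n hn => (one_fifth_lt_distNearestInt_iff _).1 (hlarge n hn)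
  have carry : ∀ n, 3 ≤ n → Int.fract (G n) = Int.fract (G (n - 1)) + Int.fract (G (n - 2)) ∨
      Int.fract (G n) = Int.fract (G (n - 1)) + Int.fract (G (n - 2)) - 1 := fun n hn => by
    rw [hG n hn]; exact Int.fract_add_eq_or _ _
  obtain ⟨l₁, u₁⟩ := hf 1 (by decide)
  obtain ⟨l₂, u₂⟩ := hf 2 (by decide)
  obtain ⟨l₃, u₃⟩ := hf 3 (by decide)
  obtain ⟨l₄, u₄⟩ := hf 4 (by decide)
  obtain ⟨l₅, u₅⟩ := hf 5 (by decide)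
  obtain ⟨l₆, u₆⟩ := hf 6 (by decide)
  rcases carry 3 le_rfl with c₃ | c₃ <;> rcases carry 4 (by norm_num) with c₄ | c₄ <;>
    rcases carry 5 (by norm_num) with c₅ | c₅ <;> rcases carry 6 (by norm_num) with c₆ | c₆ <;>
    norm_num at c₃ c₄ c₅ c₆ <;> linarith

lemma inf'_distNearestInt_le_one_fifth {G : ℕ → ℝ}
    (hG : ∀ n, 3 ≤ n → G n = G (n - 1) + G (n - 2)) {k : ℕ} (hk : 6 ≤ k)
    (hne : (Finset.Icc 1 k).Nonempty) :
    (Finset.Icc 1 k).inf' hne (fun n => distNearestInt (G n)) ≤ 1 / 5 := by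
  obtain ⟨n, hn, hsmall⟩ := exists_distNearestInt_le_one_fifth hG
  have hn' : n ∈ Finset.Icc 1 k := by
    rw [Finset.mem_Icc] at hn ⊢; omega
  exact Finset.inf'_le_of_le _ hn' hsmall

lemma not_five_dvd_fib_succ_add_two_mul_fib (n : ℕ) : ¬ 5 ∣ Nat.fib (n + 1) + 2 * Nat.fib n := by
  induction n with
  | zero => decide
  | succ n ih =>
    have hstep : Nat.fib (n + 2) + 2 * Nat.fib (n + 1) + 5 * Nat.fib n =
        3 * (Nat.fib (n + 1) + 2 * Nat.fib n) := by
      rw [Nat.fib_add_two]; ring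
    intro h5
    have : 5 ∣ 3 * (Nat.fib (n + 1) + 2 * Nat.fib n) :=
      hstep ▸ dvd_add h5 (dvd_mul_right 5 _)
    exact ih ((Nat.Coprime.dvd_mul_left (by decide)).1 this)

theorem fib_like_min_large (k : ℕ) (hk : 6 ≤ k) :
    IsGreatest {y : ℝ | ∃ G : ℕ → ℝ, (∀ n, 3 ≤ n → G n = G (n - 1) + G (n - 2)) ∧
      y = (Finset.Icc 1 k).inf' (Finset.nonempty_Icc.mpr (by omega))
            (fun n => distNearestInt (G n))} (1 / 5) := by
  set c : ℕ → ℕ := fun n => Nat.fib (n + 1) + 2 * Nat.fib n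
  have hc : ∀ n, 3 ≤ n → (c n : ℝ) / 5 = (c (n - 1) : ℝ) / 5 + (c (n - 2) : ℝ) / 5 := by
    intro n hn
    obtain ⟨m, rfl⟩ : ∃ m, n = m + 2 := ⟨n - 2, by omega⟩
    simp only [c, Nat.add_sub_cancel, show m + 2 - 1 = m + 1 by omega, Nat.fib_add_two]
    push_cast; ring
  refine ⟨⟨fun n => (c n : ℝ) / 5, hc,
    le_antisymm ?_ (inf'_distNearestInt_le_one_fifth hc hk _)⟩, ?_⟩
  · refine Finset.le_inf' _ _ fun n _ => ?_
    have h := one_div_le_distNearestInt_intCast_div (q := 5) (by norm_num) (m := c n)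
      (by exact_mod_cast not_five_dvd_fib_succ_add_two_mul_fib n)
    simpa using h
  · rintro y ⟨G, hG, rfl⟩
    exact inf'_distNearestInt_le_one_fifth hG hk _
end

section
/- For every real number α, liminf_{n→∞} ‖F_n α‖ ≤ 1/5. -/
open Filter Real
open scoped goldenRatio

lemma eq_zero_of_abs_le_of_mul_succ {r C : ℝ} {u : ℕ → ℝ} (hr : 1 < r)
    (hu : ∀ k, u (k + 1) = r * u k) (hC : ∀ k, |u k| ≤ C) : u 0 = 0 := by
  by_contra h0
  have hpow : ∀ k, |u k| = r ^ k * |u 0| := by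
    intro k
    induction k with
    | zero => simp
    | succ k ih => rw [hu, abs_mul, abs_of_pos (by linarith), ih, pow_succ]; ring
  obtain ⟨k, hk⟩ := pow_unbounded_of_one_lt (C / |u 0|) hr
  have := hC k
  rw [hpow, ← le_div_iff₀ (abs_pos.mpr h0)] at this
  linarith

/-- Models the signed residues `x n - round (x n)` of a real sequence with
`x (n + 2) = x n + x (n + 1)`. The lower bound is non-strict so that the 4-cycle
`2/5, 1/5, -2/5, -1/5` is an instance. -/
structure FarFibResidues (b : ℕ → ℝ) : Prop where
  one_fifth_le_abs : ∀ n, 1 / 5 ≤ |b n|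
  abs_le_half : ∀ n, |b n| ≤ 1 / 2
  exists_carry : ∀ n, ∃ k : ℤ, b (n + 2) = b n + b (n + 1) - k

namespace FarFibResidues

variable {b : ℕ → ℝ} {n : ℕ}

lemma shift (h : FarFibResidues b) (m : ℕ) : FarFibResidues (fun n => b (n + m)) where
  one_fifth_le_abs n := h.one_fifth_le_abs (n + m)
  abs_le_half n := h.abs_le_half (n + m)
  exists_carry n := by simpa only [Nat.add_right_comm _ m] using h.exists_carry (n + m)

lemma neg (h : FarFibResidues b) : FarFibResidues (fun n => -b n) where
  one_fifth_le_abs n := (abs_neg (b n)).symm ▸ h.one_fifth_le_abs n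
  abs_le_half n := (abs_neg (b n)).symm ▸ h.abs_le_half n
  exists_carry n := by
    obtain ⟨k, hk⟩ := h.exists_carry n
    exact ⟨-k, by push_cast; linarith⟩

lemma neg_half_le (h : FarFibResidues b) (n : ℕ) : -(1 / 2) ≤ b n :=
  (abs_le.mp (h.abs_le_half n)).1

lemma le_half (h : FarFibResidues b) (n : ℕ) : b n ≤ 1 / 2 :=
  (abs_le.mp (h.abs_le_half n)).2

lemma one_fifth_le_of_gt (h : FarFibResidues b) (hn : -(1 / 5) < b n) : 1 / 5 ≤ b n :=
  (le_abs'.mp (h.one_fifth_le_abs n)).resolve_left hn.not_ge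

lemma le_neg_one_fifth_of_lt (h : FarFibResidues b) (hn : b n < 1 / 5) : b n ≤ -(1 / 5) :=
  (le_abs'.mp (h.one_fifth_le_abs n)).resolve_right hn.not_ge

lemma ne_zero (h : FarFibResidues b) (n : ℕ) : b n ≠ 0 := fun h0 => by
  have := h.one_fifth_le_abs n
  rw [h0, abs_zero] at this
  norm_num at this

lemma eq_add_sub_of_abs_lt (h : FarFibResidues b) (k : ℤ)
    (hk : |b n + b (n + 1) - b (n + 2) - k| < 1) : b (n + 2) = b n + b (n + 1) - k := by
  obtain ⟨j, hj⟩ := h.exists_carry n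
  have hjk : |((j - k : ℤ) : ℝ)| < 1 := by
    rw [hj] at hk
    push_cast
    convert hk using 2
    ring
  rw [← Int.cast_abs, ← Int.cast_one, Int.cast_lt, Int.abs_lt_one_iff, sub_eq_zero] at hjk
  rw [hj, hjk]

lemma eq_add_of_abs_add_lt (h : FarFibResidues b) (hs : |b n + b (n + 1)| < 1 / 2) :
    b (n + 2) = b n + b (n + 1) := by
  have hz := abs_le.mp (h.abs_le_half (n + 2))
  have hs := abs_lt.mp hs
  simpa using h.eq_add_sub_of_abs_lt 0 (abs_lt.mpr ⟨by push_cast; linarith, by push_cast; linarith⟩)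

lemma one_fifth_le_abs_add (h : FarFibResidues b) (n : ℕ) : 1 / 5 ≤ |b n + b (n + 1)| := by
  by_contra! hs
  have h2 := h.one_fifth_le_abs (n + 2)
  rw [h.eq_add_of_abs_add_lt (hs.trans (by norm_num))] at h2
  linarith

lemma eq_add_or_eq_add_sub_one (h : FarFibResidues b) (h0 : 0 < b n) (h1 : 0 < b (n + 1)) :
    b (n + 2) = b n + b (n + 1) ∨ b (n + 2) = b n + b (n + 1) - 1 := by
  obtain ⟨k, hk⟩ := h.exists_carry n
  have hx := h.one_fifth_le_of_gt (n := n) (by linarith)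
  have hy := h.one_fifth_le_of_gt (n := n + 1) (by linarith)
  have hlo : (-1 : ℝ) < k := by linarith [h.le_half (n + 2)]
  have hhi : (k : ℝ) < 2 := by linarith [h.neg_half_le (n + 2), h.le_half n, h.le_half (n + 1)]
  have : k = 0 ∨ k = 1 := by
    have : -1 < k := by exact_mod_cast hlo
    have : k < 2 := by exact_mod_cast hhi
    omega
  rcases this with rfl | rfl <;> simp [hk]

lemma step_pos_neg (h : FarFibResidues b) (h0 : 0 < b n) (h1 : b (n + 1) < 0) :
    b (n + 2) = b n + b (n + 1) ∧ b (n + 2) < 0 := by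
  have hx := h.one_fifth_le_of_gt (n := n) (by linarith)
  have hy := h.le_neg_one_fifth_of_lt (n := n + 1) (by linarith)
  have hx' := h.le_half n
  have hy' := h.neg_half_le (n + 1)
  have h2 : b (n + 2) = b n + b (n + 1) :=
    h.eq_add_of_abs_add_lt (abs_lt.mpr ⟨by linarith, by linarith⟩)
  refine ⟨h2, (h.ne_zero (n + 2)).lt_or_gt.resolve_right fun h2pos => ?_⟩
  have hz := h.one_fifth_le_of_gt (n := n + 2) (by linarith)
  have h3 : b (n + 3) = b (n + 1) + b (n + 2) :=
    h.eq_add_of_abs_add_lt (abs_lt.mpr ⟨by linarith, by linarith⟩)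
  have hw := h.le_neg_one_fifth_of_lt (n := n + 3) (by linarith)
  have hsum : 1 / 5 ≤ |b (n + 2) + b (n + 3)| := h.one_fifth_le_abs_add (n + 2)
  have : |b (n + 2) + b (n + 3)| < 1 / 5 := abs_lt.mpr ⟨by linarith, by linarith⟩
  linarith

lemma step_pos_pos (h : FarFibResidues b) (h0 : 0 < b n) (h1 : 0 < b (n + 1)) :
    b (n + 2) = b n + b (n + 1) - 1 ∧ b (n + 2) < 0 := by
  have hx := h.one_fifth_le_of_gt (n := n) (by linarith)
  have hy := h.one_fifth_le_of_gt (n := n + 1) (by linarith)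
  rcases h.eq_add_or_eq_add_sub_one h0 h1 with h2 | h2
  · exfalso
    have h2pos : 0 < b (n + 2) := by linarith
    have h2le := h.le_half (n + 2)
    rcases (h.eq_add_or_eq_add_sub_one h1 h2pos :
        b (n + 3) = _ ∨ b (n + 3) = _) with h3 | h3
    · linarith [h.le_half (n + 3)]
    · have h3neg : b (n + 3) < 0 :=
        (h.le_neg_one_fifth_of_lt (by linarith [h.le_half (n + 1)])).trans_lt (by norm_num)
      obtain ⟨h4, h4neg⟩ : b (n + 4) = b (n + 2) + b (n + 3) ∧ b (n + 4) < 0 :=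
        h.step_pos_neg h2pos h3neg
      linarith [h.le_neg_one_fifth_of_lt (n := n + 4) (by linarith)]
  · exact ⟨h2, (h.le_neg_one_fifth_of_lt (by linarith [h.le_half n, h.le_half (n + 1)])).trans_lt
      (by norm_num)⟩

lemma step_neg_pos (h : FarFibResidues b) (h0 : b n < 0) (h1 : 0 < b (n + 1)) :
    b (n + 2) = b n + b (n + 1) ∧ 0 < b (n + 2) := by
  obtain ⟨h2, h2neg⟩ := h.neg.step_pos_neg (n := n) (neg_pos.mpr h0) (neg_lt_zero.mpr h1)
  exact ⟨by linarith, by linarith⟩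

lemma step_neg_neg (h : FarFibResidues b) (h0 : b n < 0) (h1 : b (n + 1) < 0) :
    b (n + 2) = b n + b (n + 1) + 1 ∧ 0 < b (n + 2) := by
  obtain ⟨h2, h2neg⟩ := h.neg.step_pos_pos (n := n) (neg_pos.mpr h0) (neg_pos.mpr h1)
  exact ⟨by linarith, by linarith⟩

lemma exists_pos_pos (h : FarFibResidues b) : ∃ n, 0 < b n ∧ 0 < b (n + 1) := by
  rcases (h.ne_zero 0).lt_or_gt with h0 | h0 <;> rcases (h.ne_zero 1).lt_or_gt with h1 | h1
  · have h2 := (h.step_neg_neg h0 h1).2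
    exact ⟨2, h2, (h.step_neg_pos h1 h2).2⟩
  · exact ⟨1, h1, (h.step_neg_pos h0 h1).2⟩
  · have h2 := (h.step_pos_neg h0 h1).2
    have h3 := (h.step_neg_neg h1 h2).2
    exact ⟨3, h3, (h.step_neg_pos h2 h3).2⟩
  · exact ⟨0, h0, h1⟩

lemma step_four (h : FarFibResidues b) (h0 : 0 < b n) (h1 : 0 < b (n + 1)) :
    b (n + 4) = 2 * b n + 3 * b (n + 1) - 1 ∧ b (n + 5) = 3 * b n + 5 * b (n + 1) - 2 ∧
      0 < b (n + 4) ∧ 0 < b (n + 5) := by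
  obtain ⟨e2, h2⟩ := h.step_pos_pos h0 h1
  obtain ⟨e3, h3⟩ : b (n + 3) = b (n + 1) + b (n + 2) ∧ b (n + 3) < 0 := h.step_pos_neg h1 h2
  obtain ⟨e4, h4⟩ : b (n + 4) = b (n + 2) + b (n + 3) + 1 ∧ 0 < b (n + 4) :=
    h.step_neg_neg h2 h3
  obtain ⟨e5, h5⟩ : b (n + 5) = b (n + 3) + b (n + 4) ∧ 0 < b (n + 5) := h.step_neg_pos h3 h4
  exact ⟨by linarith, by linarith, h4, h5⟩

/-- `(2/5, 1/5)` is the fixed point of the affine map `(b n, b (n+1)) ↦ (b (n+4), b (n+5))`, and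
`(1, φ)` is a left eigenvector of its linear part `[[2, 3], [3, 5]]`, for the eigenvalue `φ ^ 4`. -/
lemma unstable_add_four (h : FarFibResidues b) (h0 : 0 < b n) (h1 : 0 < b (n + 1)) :
    b (n + 4) - 2 / 5 + φ * (b (n + 5) - 1 / 5) =
      φ ^ 4 * (b n - 2 / 5 + φ * (b (n + 1) - 1 / 5)) := by
  obtain ⟨e4, e5, -⟩ := h.step_four h0 h1
  have hφ4 : φ ^ 4 = 3 * φ + 2 := by linear_combination (φ ^ 2 + φ + 2) * goldenRatio_sq
  have hφ5 : φ ^ 5 = 5 * φ + 3 := by linear_combination φ * hφ4 + 3 * goldenRatio_sq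
  rw [e4, e5]
  linear_combination (2 / 5 - b n) * hφ4 + (1 / 5 - b (n + 1)) * hφ5

lemma eq_one_fifth_of_pos_of_pos (h : FarFibResidues b) (h0 : 0 < b 0) (h1 : 0 < b 1) :
    b 1 = 1 / 5 := by
  have hpos : ∀ k, 0 < b (4 * k) ∧ 0 < b (4 * k + 1) := by
    intro k
    induction k with
    | zero => exact ⟨h0, h1⟩
    | succ k ih => exact ⟨(h.step_four ih.1 ih.2).2.2.1, (h.step_four ih.1 ih.2).2.2.2⟩
  have hstable : b 0 - 2 / 5 + φ * (b 1 - 1 / 5) = 0 :=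
    eq_zero_of_abs_le_of_mul_succ (u := fun k => b (4 * k) - 2 / 5 + φ * (b (4 * k + 1) - 1 / 5))
      (one_lt_pow₀ one_lt_goldenRatio four_ne_zero)
      (fun k => h.unstable_add_four (hpos k).1 (hpos k).2)
      (C := 3) fun k => by
        have := h.abs_le_half (4 * k); have := h.abs_le_half (4 * k + 1)
        have := one_lt_goldenRatio; have := goldenRatio_lt_two
        rw [abs_le] at *
        constructor <;> nlinarith
  obtain ⟨e2, h2⟩ := h.step_pos_pos h0 h1
  have e3 : b 3 = b 1 + b 2 := (h.step_pos_neg h1 h2).1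
  have h3 := h.le_neg_one_fifth_of_lt (n := 3) (by linarith [(h.step_pos_neg h1 h2).2])
  have hkey : (2 - φ) * (b 1 - 1 / 5) ≤ 0 := by linarith
  have hle := nonpos_of_mul_nonpos_right hkey (sub_pos.mpr goldenRatio_lt_two)
  linarith [h.one_fifth_le_of_gt (n := 1) (by linarith)]

lemma exists_abs_eq_one_fifth (h : FarFibResidues b) : ∃ n, |b n| = 1 / 5 := by
  obtain ⟨n, h0, h1⟩ := h.exists_pos_pos
  refine ⟨n + 1, ?_⟩
  rw [abs_of_pos h1]
  simpa [add_comm] using (h.shift n).eq_one_fifth_of_pos_of_pos (by simpa using h0)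
    (by simpa [add_comm] using h1)

end FarFibResidues

lemma farFibResidues_sub_round {x : ℕ → ℝ} (hx : ∀ n, x (n + 2) = x n + x (n + 1))
    (hfar : ∀ n, 1 / 5 ≤ distNearestInt (x n)) : FarFibResidues (fun n => x n - round (x n)) where
  one_fifth_le_abs := hfar
  abs_le_half n := abs_sub_round (x n)
  exists_carry n :=
    ⟨round (x (n + 2)) - round (x n) - round (x (n + 1)), by push_cast; rw [hx]; ring⟩

theorem liminf_fib_dist_le (α : ℝ) :
    Filter.liminf (fun n : ℕ => distNearestInt ((Nat.fib n : ℝ) * α)) Filter.atTop ≤ 1 / 5 := by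
  by_contra! hlim
  obtain ⟨N, hN⟩ := eventually_atTop.mp <|
    eventually_lt_of_lt_liminf hlim (isBoundedUnder_of ⟨0, fun n => abs_nonneg _⟩)
  have hfar (n : ℕ) : 1 / 5 < distNearestInt (Nat.fib (N + n) * α) := hN _ (Nat.le_add_right N n)
  have hrec (n : ℕ) :
      (Nat.fib (N + (n + 2)) : ℝ) * α = Nat.fib (N + n) * α + Nat.fib (N + (n + 1)) * α := by
    rw [← add_mul, ← Nat.cast_add]
    exact congrArg (fun m : ℕ => (m : ℝ) * α) (Nat.fib_add_two (n := N + n))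
  obtain ⟨n, hn⟩ := (farFibResidues_sub_round hrec fun n => (hfar n).le).exists_abs_eq_one_fifth
  exact (hfar n).ne' hn
end

section
/- For every real number α, liminf_{n→∞} ‖φ^n α‖ ≤ 1/5. -/
/-!
The signed distances `xₙ = φⁿα - round (φⁿα)` lie in `[-1/2, 1/2]` and, because
`φⁿ⁺² = φⁿ⁺¹ + φⁿ`, satisfy the Fibonacci recurrence modulo `1` with corrections in `{-1, 0, 1}`.
A finite case analysis on these corrections and on the signs of the `xₙ` shows that no six
consecutive terms can all have `|xₙ| > 1/5`, so `‖φⁿα‖ ≤ 1/5` infinitely often.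
-/

lemma int_mem_Icc_of_abs_le_half {a b c : ℝ} {m : ℤ} (hm : c = b + a + m)
    (ha : |a| ≤ 1 / 2) (hb : |b| ≤ 1 / 2) (hc : |c| ≤ 1 / 2) : m ∈ Set.Icc (-1) 1 := by
  rw [abs_le] at ha hb hc
  have hlo : (-2 : ℤ) < m := by exact_mod_cast (by linarith : (-2 : ℝ) < m)
  have hhi : m < 2 := by exact_mod_cast (by linarith : (m : ℝ) < 2)
  constructor <;> omega

set_option maxHeartbeats 1000000 in
lemma exists_lt_six_abs_le_of_fib_mod_one {x : ℕ → ℝ} (hx : ∀ n, |x n| ≤ 1 / 2)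
    (hrec : ∀ n, ∃ m : ℤ, x (n + 2) = x (n + 1) + x n + m) : ∃ n < 6, |x n| ≤ 1 / 5 := by
  by_contra! hfar
  have hcorr : ∀ n, ∃ m : ℤ, m ∈ Set.Icc (-1) 1 ∧ x (n + 2) = x (n + 1) + x n + m := fun n =>
    let ⟨m, hm⟩ := hrec n
    ⟨m, int_mem_Icc_of_abs_le_half hm (hx n) (hx (n + 1)) (hx (n + 2)), hm⟩
  obtain ⟨m₀, ⟨h₀l, h₀u⟩, h₀⟩ := hcorr 0
  obtain ⟨m₁, ⟨h₁l, h₁u⟩, h₁⟩ := hcorr 1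
  obtain ⟨m₂, ⟨h₂l, h₂u⟩, h₂⟩ := hcorr 2
  obtain ⟨m₃, ⟨h₃l, h₃u⟩, h₃⟩ := hcorr 3
  have hb : ∀ n, -(1 / 2) ≤ x n ∧ x n ≤ 1 / 2 := fun n => abs_le.mp (hx n)
  obtain ⟨b₀l, b₀u⟩ := hb 0
  obtain ⟨b₁l, b₁u⟩ := hb 1
  obtain ⟨b₂l, b₂u⟩ := hb 2
  obtain ⟨b₃l, b₃u⟩ := hb 3
  obtain ⟨b₄l, b₄u⟩ := hb 4
  obtain ⟨b₅l, b₅u⟩ := hb 5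
  have hf : ∀ n < 6, 1 / 5 < x n ∨ 1 / 5 < -x n := fun n hn => lt_abs.mp (hfar n hn)
  rcases hf 0 (by norm_num) with f₀ | f₀ <;> rcases hf 1 (by norm_num) with f₁ | f₁ <;>
    interval_cases m₀ <;> push_cast at h₀ <;> rcases hf 2 (by norm_num) with f₂ | f₂ <;>
    first
    | linarith
    | (interval_cases m₁ <;> push_cast at h₁ <;> rcases hf 3 (by norm_num) with f₃ | f₃ <;>
       first
       | linarith
       | (interval_cases m₂ <;> push_cast at h₂ <;> rcases hf 4 (by norm_num) with f₄ | f₄ <;>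
          first
          | linarith
          | (interval_cases m₃ <;> push_cast at h₃ <;> rcases hf 5 (by norm_num) with f₅ | f₅ <;>
             linarith)))

lemma frequently_distNearestInt_le_of_fib {y : ℕ → ℝ} (hy : ∀ n, y (n + 2) = y (n + 1) + y n) :
    ∃ᶠ n in Filter.atTop, distNearestInt (y n) ≤ 1 / 5 := by
  refine Filter.frequently_atTop.mpr fun N => ?_
  obtain ⟨k, -, hk⟩ := exists_lt_six_abs_le_of_fib_mod_one
    (x := fun k => y (N + k) - round (y (N + k))) (fun k => abs_sub_round _) fun k =>
      ⟨round (y (N + k + 1)) + round (y (N + k)) - round (y (N + k + 2)), by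
        push_cast; linear_combination hy (N + k)⟩
  exact ⟨N + k, N.le_add_right k, hk⟩

lemma φ_pow_add_two (n : ℕ) : φ ^ (n + 2) = φ ^ (n + 1) + φ ^ n :=
  eq_add_of_sub_eq' (Real.goldenRatio_pow_sub_goldenRatio_pow n)

theorem liminf_golden_dist_le (α : ℝ) :
    Filter.liminf (fun n : ℕ => distNearestInt (φ ^ n * α)) Filter.atTop ≤ 1 / 5 :=
  Filter.liminf_le_of_frequently_le
    (frequently_distNearestInt_le_of_fib fun n => by rw [φ_pow_add_two]; ring)
    (Filter.isBoundedUnder_of ⟨0, fun _ => abs_nonneg _⟩)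
end

section
/- For every integer k ≥ 1 the following two identities hold (stated in cross-multiplied form): T_{4k+6}·(F_{4k+2} + 3) = (T_{4k+2} + 1)·F_{4k+6}, and (T_{4k} − 1)·F_{4k+4} = T_{4k+4}·(F_{4k} − 3). -/
/-!
Peeling off the first term of the sum gives `T (n + 2) = F n - T n`, whence
`T (2m + 2) = F m F (m+1)` and `T (2m) = F m (F (m+1) - F m)`. With these and the doubling
formulas for `F (2m + j)`, both identities become polynomial identities in `x = F m`,
`y = F (m+1)` that hold modulo Cassini's relation `y² - xy - x² = (-1)^m`. So they hold for
every `m` with `(-1)^m` in place of `1`, and the theorem is the case `m = 2k`.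
-/

/-- `T n = Σ_{k=1}^{⌊n/2⌋} (−1)^{k+1} F_{n−2k}`. -/
def T (n : ℕ) : ℤ := ∑ k ∈ Finset.Icc 1 (n / 2), (-1 : ℤ) ^ (k + 1) * (Nat.fib (n - 2 * k) : ℤ)

open Finset Nat

theorem fib_cassini (m : ℕ) :
    (fib (m + 1) : ℤ) ^ 2 - fib m * fib (m + 1) - fib m ^ 2 = (-1) ^ m := by
  induction m with
  | zero => simp
  | succ m ih =>
    rw [fib_add_two]
    push_cast
    linear_combination -ih

theorem T_add_two (n : ℕ) : T (n + 2) = fib n - T n := by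
  have hN : (n + 2) / 2 = n / 2 + 1 := by omega
  rw [T, T, hN, ← Ico_add_one_right_eq_Icc, ← Ico_add_one_right_eq_Icc,
    sum_eq_sum_Ico_succ_bot (by omega), ← sum_Ico_add' _ 1 (n / 2 + 1) 1]
  have hshift : ∀ k, (-1 : ℤ) ^ (k + 1 + 1) * fib (n + 2 - 2 * (k + 1))
      = -((-1) ^ (k + 1) * fib (n - 2 * k)) := fun k => by
    rw [show n + 2 - 2 * (k + 1) = n - 2 * k by omega, pow_succ]
    ring
  simp [hshift, sub_eq_add_neg]

theorem T_two_mul_add_two (m : ℕ) : T (2 * m + 2) = fib m * fib (m + 1) := by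
  induction m with
  | zero => simp [T]
  | succ m ih =>
    rw [show 2 * (m + 1) + 2 = 2 * m + 2 + 2 by ring, T_add_two, ih, fib_two_mul_add_two,
      fib_add_two (n := m)]
    push_cast
    ring

theorem T_two_mul (m : ℕ) : T (2 * m) = fib m * (fib (m + 1) - fib m) := by
  have hT₄ : T (2 * m + 4) = fib (m + 1) * fib (m + 2) := T_two_mul_add_two (m + 1)
  have hf : (fib (2 * m + 2) : ℤ) = fib (2 * m) + fib (2 * m + 1) := mod_cast fib_add_two
  have hf₁ : (fib (2 * m + 1) : ℤ) = fib (m + 1) ^ 2 + fib m ^ 2 :=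
    mod_cast fib_two_mul_add_one m
  have hf₂ : (fib (m + 2) : ℤ) = fib m + fib (m + 1) := mod_cast fib_add_two
  calc T (2 * m) = T (2 * m + 4) - fib (2 * m + 1) := by
        have hT₄' : T (2 * m + 4) = fib (2 * m + 2) - T (2 * m + 2) := T_add_two _
        rw [hT₄', T_add_two, hf]
        ring
    _ = fib m * (fib (m + 1) - fib m) := by
        rw [hT₄, hf₁, hf₂]
        ring

theorem T_mul_fib_add_eq (m : ℕ) :
    T (2 * m + 6) * (fib (2 * m + 2) + 3 * (-1) ^ m)
      = (T (2 * m + 2) + (-1) ^ m) * fib (2 * m + 6) := by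
  have hT₆ : T (2 * m + 6) = fib (m + 2) * fib (m + 3) := T_two_mul_add_two (m + 2)
  have hf₆ : (fib (2 * m + 6) : ℤ) = fib (m + 3) * (2 * fib (m + 2) + fib (m + 3)) :=
    mod_cast fib_two_mul_add_two (m + 2)
  have hf₃ : (fib (m + 3) : ℤ) = fib (m + 1) + fib (m + 2) := mod_cast fib_add_two
  have hf₂ : (fib (m + 2) : ℤ) = fib m + fib (m + 1) := mod_cast fib_add_two
  rw [hT₆, hf₆, T_two_mul_add_two, fib_two_mul_add_two, hf₃, hf₂]
  push_cast
  linear_combination (fib m + 2 * fib (m + 1) : ℤ) * fib (m + 1) * fib_cassini m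

theorem T_sub_mul_fib_eq (m : ℕ) :
    (T (2 * m) - (-1) ^ m) * fib (2 * m + 4)
      = T (2 * m + 4) * (fib (2 * m) - 3 * (-1) ^ m) := by
  have hT₄ : T (2 * m + 4) = fib (m + 1) * fib (m + 2) := T_two_mul_add_two (m + 1)
  have hf₀ : (fib (2 * m) : ℤ) = T (2 * m) + T (2 * m + 2) := by
    rw [T_add_two]
    ring
  have hf₄ : (fib (2 * m + 4) : ℤ) = fib (m + 2) * (2 * fib (m + 1) + fib (m + 2)) :=
    mod_cast fib_two_mul_add_two (m + 1)
  have hf₂ : (fib (m + 2) : ℤ) = fib m + fib (m + 1) := mod_cast fib_add_two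
  rw [hf₀, hf₄, hT₄, hf₂, T_two_mul, T_two_mul_add_two]
  linear_combination (fib m + fib (m + 1) : ℤ) * fib m * fib_cassini m

theorem T_cross_multiplied_identities_general (k : ℕ) :
    T (4 * k + 6) * ((Nat.fib (4 * k + 2) : ℤ) + 3)
      = (T (4 * k + 2) + 1) * (Nat.fib (4 * k + 6) : ℤ) ∧
    (T (4 * k) - 1) * (Nat.fib (4 * k + 4) : ℤ)
      = T (4 * k + 4) * ((Nat.fib (4 * k) : ℤ) - 3) := by
  have hsign : (-1 : ℤ) ^ (2 * k) = 1 := (even_two_mul k).neg_one_pow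
  have hidx : 2 * (2 * k) = 4 * k := by ring
  constructor
  · simpa only [hsign, hidx, mul_one] using T_mul_fib_add_eq (2 * k)
  · simpa only [hsign, hidx, mul_one] using T_sub_mul_fib_eq (2 * k)

theorem T_cross_multiplied_identities (k : ℕ) (hk : 1 ≤ k) :
    T (4 * k + 6) * ((Nat.fib (4 * k + 2) : ℤ) + 3)
      = (T (4 * k + 2) + 1) * (Nat.fib (4 * k + 6) : ℤ) ∧
    (T (4 * k) - 1) * (Nat.fib (4 * k + 4) : ℤ)
      = T (4 * k + 4) * ((Nat.fib (4 * k) : ℤ) - 3) :=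
  T_cross_multiplied_identities_general k
end
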